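/- Let α be a root of X³ − 3X − 1. Then the norm from ℚ(α) to ℚ of −P² + (−5 + α + α²)·R² equals −P⁶ − 9P⁴R² − 18P²R⁴ + 9R⁶ for all rational P, R. -/

import Mathlib

/-! Multiplication by `a₀ + a₁ x + a₂ x²` in the power basis `1, x, x²` of `K[x]/(x³ - p x - q)`
has a 3 × 3 matrix read off from `x³ = p x + q`, and the norm is its determinant. For `ℚ(α)` the
power basis has three elements because `X³ - 3X - 1` is irreducible: by the rational root
theorem a rational root would be an integer `n` with `n (n² - 3) = 1`. -/

open Polynomial IntermediateField

theorem PowerBasis.norm_add_mul_gen_add_mul_gen_sq {K L : Type*} [CommRing K] [Nontrivial K]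
    [CommRing L] [Algebra K L] (pb : PowerBasis K L) {p q : K}
    (hmin : minpoly K pb.gen = X ^ 3 - C p * X - C q) (a₀ a₁ a₂ : K) :
    Algebra.norm K
        (algebraMap K L a₀ + algebraMap K L a₁ * pb.gen + algebraMap K L a₂ * pb.gen ^ 2) =
      a₀ ^ 3 + 2 * p * a₀ ^ 2 * a₂ + p ^ 2 * a₀ * a₂ ^ 2 - p * a₀ * a₁ ^ 2
        - 3 * q * a₀ * a₁ * a₂ - p * q * a₁ * a₂ ^ 2 + q * a₁ ^ 3 + q ^ 2 * a₂ ^ 3 := by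
  set x := pb.gen
  set β := algebraMap K L a₀ + algebraMap K L a₁ * x + algebraMap K L a₂ * x ^ 2
  have hdim : pb.dim = 3 := by
    rw [← pb.natDegree_minpoly, hmin]
    compute_degree!
  have hx : x ^ 3 = algebraMap K L p * x + algebraMap K L q := by
    have := minpoly.aeval K x
    rw [hmin] at this
    simp only [map_sub, map_mul, map_pow, aeval_X, aeval_C] at this
    linear_combination this
  let b := pb.basis.reindex (finCongr hdim)
  have hb : ∀ i : Fin 3, b i = x ^ (i : ℕ) := fun i => by
    rw [Module.Basis.reindex_apply, pb.basis_eq_pow]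
    rfl
  let M : Matrix (Fin 3) (Fin 3) K :=
    !![a₀, q * a₂, q * a₁; a₁, a₀ + p * a₂, p * a₁ + q * a₂; a₂, a₁, a₀ + p * a₂]
  have hcol : ∀ j, β * b j = ∑ i, M i j • b i := by
    intro j
    fin_cases j <;>
      simp only [β, M, Fin.sum_univ_three, hb, Algebra.smul_def, Matrix.of_apply, Matrix.cons_val,
        Fin.zero_eta, Fin.mk_one, Fin.reduceFinMk, Fin.val_zero, Fin.val_one, Fin.val_two, map_add,
        map_mul]
    · ring
    · linear_combination algebraMap K L a₂ * hx
    · linear_combination (algebraMap K L a₁ + algebraMap K L a₂ * x) * hx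
  have hM : Algebra.leftMulMatrix b β = M := by
    ext i j
    rw [Algebra.leftMulMatrix_eq_repr_mul, hcol j, b.repr_sum_self]
  rw [Algebra.norm_eq_matrix_det b, hM, Matrix.det_fin_three]
  simp only [M, Matrix.of_apply, Matrix.cons_val]
  ring

theorem rat_cube_sub_three_mul_sub_one_ne_zero (r : ℚ) : r ^ 3 - 3 * r - 1 ≠ 0 := by
  intro hr
  have hroot : aeval r (X ^ 3 - C 3 * X - C 1 : ℤ[X]) = 0 := by simpa [map_ofNat] using hr
  obtain ⟨n, rfl, -⟩ := exists_integer_of_is_root_of_monic (by monicity!) hroot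
  have hn : n * (n ^ 2 - 3) = 1 := by
    have : ((n ^ 3 - 3 * n - 1 : ℤ) : ℚ) = 0 := by push_cast; simpa using hr
    linear_combination Int.cast_eq_zero.mp this
  rcases Int.eq_one_or_neg_one_of_mul_eq_one hn with rfl | rfl <;> norm_num at hn

theorem irreducible_X_pow_three_sub_three_mul_X_sub_one :
    Irreducible (X ^ 3 - C 3 * X - C 1 : ℚ[X]) := by
  refine irreducible_of_degree_le_three_of_not_isRoot ?_ fun r hr => ?_
  · rw [show (X ^ 3 - C 3 * X - C 1 : ℚ[X]).natDegree = 3 by compute_degree!]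
    decide
  · exact rat_cube_sub_three_mul_sub_one_ne_zero r (by simpa [map_ofNat] using hr)

theorem minpoly_eq_X_pow_three_sub_three_mul_X_sub_one {A : Type*} [Ring A] [Nontrivial A]
    [Algebra ℚ A] {α : A} (hα : α ^ 3 - 3 * α - 1 = 0) : minpoly ℚ α = X ^ 3 - C 3 * X - C 1 :=
  (minpoly.eq_of_irreducible_of_monic irreducible_X_pow_three_sub_three_mul_X_sub_one
    (by simpa [map_ofNat] using hα) (by monicity!)).symm

theorem stmt_12 (α : ℝ) (hα : α ^ 3 - 3 * α - 1 = 0) (P R : ℚ) :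
    Algebra.norm ℚ
        (-(P : ℚ⟮α⟯) ^ 2 +
          (-5 + AdjoinSimple.gen ℚ α + (AdjoinSimple.gen ℚ α) ^ 2) * (R : ℚ⟮α⟯) ^ 2) =
      -P ^ 6 - 9 * P ^ 4 * R ^ 2 - 18 * P ^ 2 * R ^ 4 + 9 * R ^ 6 := by
  have hmin := minpoly_eq_X_pow_three_sub_three_mul_X_sub_one hα
  have hint : IsIntegral ℚ α := minpoly.ne_zero_iff.mp <|
    hmin ▸ irreducible_X_pow_three_sub_three_mul_X_sub_one.ne_zero
  let pb := adjoin.powerBasis hint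
  have hmin_gen : minpoly ℚ pb.gen = X ^ 3 - C 3 * X - C 1 := (minpoly_gen ℚ α).trans hmin
  have hβ : -(P : ℚ⟮α⟯) ^ 2 +
        (-5 + AdjoinSimple.gen ℚ α + AdjoinSimple.gen ℚ α ^ 2) * (R : ℚ⟮α⟯) ^ 2 =
      algebraMap ℚ ℚ⟮α⟯ (-P ^ 2 - 5 * R ^ 2) + algebraMap ℚ ℚ⟮α⟯ (R ^ 2) * pb.gen +
        algebraMap ℚ ℚ⟮α⟯ (R ^ 2) * pb.gen ^ 2 := by
    simp only [pb, adjoin.powerBasis_gen, eq_ratCast]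
    push_cast
    ring
  rw [hβ]
  exact (pb.norm_add_mul_gen_add_mul_gen_sq hmin_gen _ _ _).trans (by ring)
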